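/- arXiv:1411.7647 — 5 statements merged into one kernel-verified Lean document; each statement's English description precedes it below -/
import Mathlib

section
/- For the real number θ_L = 2π Σ_{i=1}^∞ F(i)/8^{i+1} where F : ℕ → {-1,1}, and any j ≥ 1, the product 8^j · θ_L is congruent modulo 2π to π·F(j)/4 + δ, where |δ| ≤ 2π Σ_{k=2}^∞ 8^{-k} = 2π/56. -/
/-!
`θ_L / 2π` is the base-8 expansion `0.0 F(1) F(2) …` with digits `±1`. Multiplying by `8 ^ j`
moves the digits `F(1), …, F(j-1)` into an integer part, which becomes a multiple of `2π`; the
digit `F(j)` lands right after the point and contributes `2π · F(j)/8 = π F(j)/4`; the remaining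
digits form a tail of absolute value at most `2π Σ_{k ≥ 2} 8^{-k} = 2π/56`.
-/

open Real

section RadixExpansion

variable {b : ℝ} {a : ℕ → ℝ} {C : ℝ}

lemma abs_div_pow_succ_le (hb : 1 < b) (ha : ∀ i, |a i| ≤ C) (i : ℕ) :
    |a i / b ^ (i + 1)| ≤ C * (1 / b) ^ (i + 1) := by
  have hb_pow : 0 < b ^ (i + 1) := pow_pos (by linarith) _
  rw [abs_div, abs_of_pos hb_pow, one_div_pow, ← div_eq_mul_one_div]
  exact div_le_div_of_nonneg_right (ha i) hb_pow.le

lemma hasSum_mul_inv_pow_succ (hb : 1 < b) (C : ℝ) :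
    HasSum (fun i : ℕ => C * (1 / b) ^ (i + 1)) (C / (b - 1)) := by
  have hb0 : 0 < b := by linarith
  have hgeo := (hasSum_geometric_of_lt_one (r := 1 / b) (by positivity)
    ((div_lt_one hb0).2 hb)).mul_left (C / b)
  have hterm : (fun i : ℕ => C / b * (1 / b) ^ i) = fun i => C * (1 / b) ^ (i + 1) := by
    ext i; ring
  have hsum : C / b * (1 - 1 / b)⁻¹ = C / (b - 1) := by
    have : b - 1 ≠ 0 := by linarith
    field_simp
  rwa [hterm, hsum] at hgeo

lemma summable_div_pow_succ (hb : 1 < b) (ha : ∀ i, |a i| ≤ C) :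
    Summable fun i => a i / b ^ (i + 1) :=
  (hasSum_mul_inv_pow_succ hb C).summable.of_norm_bounded (abs_div_pow_succ_le hb ha)

lemma abs_tsum_div_pow_succ_le (hb : 1 < b) (ha : ∀ i, |a i| ≤ C) :
    |∑' i, a i / b ^ (i + 1)| ≤ C / (b - 1) :=
  tsum_of_norm_bounded (f := fun i => a i / b ^ (i + 1)) (hasSum_mul_inv_pow_succ hb C)
    (abs_div_pow_succ_le hb ha)

lemma mul_tsum_div_pow_succ (hb : 1 < b) (ha : ∀ i, |a i| ≤ C) :
    b * ∑' i, a i / b ^ (i + 1) = a 0 + ∑' i, a (i + 1) / b ^ (i + 1) := by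
  rw [(summable_div_pow_succ hb ha).tsum_eq_zero_add, mul_add, ← tsum_mul_left]
  have hb0 : b ≠ 0 := by positivity
  congr 1
  · rw [zero_add, pow_one, mul_div_cancel₀ _ hb0]
  · congr 1; ext i; rw [pow_succ b (i + 1)]; field_simp

end RadixExpansion

lemma exists_int_pow_mul_tsum_div_pow_succ {b : ℤ} (hb : 1 < b) {a : ℕ → ℝ} {C : ℝ}
    (ha : ∀ i, |a i| ≤ C) (ha_int : ∀ i, ∃ k : ℤ, a i = k) (m : ℕ) :
    ∃ n : ℤ, (b : ℝ) ^ m * ∑' i, a i / (b : ℝ) ^ (i + 1) =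
      n + ∑' i, a (i + m) / (b : ℝ) ^ (i + 1) := by
  have hb' : (1 : ℝ) < b := by exact_mod_cast hb
  induction m with
  | zero => exact ⟨0, by simp⟩
  | succ m ih =>
    obtain ⟨n, hn⟩ := ih
    obtain ⟨k, hk⟩ := ha_int m
    have hshift := mul_tsum_div_pow_succ hb' (a := fun i => a (i + m)) (fun i => ha _)
    refine ⟨b * n + k, ?_⟩
    simp only [zero_add, show ∀ i, i + 1 + m = i + (m + 1) by omega] at hshift
    rw [pow_succ', mul_assoc, hn, mul_add, hshift, hk]
    push_cast
    ring

/-- For `θ_L = 2π Σ_{i=1}^∞ F(i)/8^{i+1}` with `F : ℕ → {-1,1}` and any `j ≥ 1`,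
`8^j · θ_L` is congruent mod `2π` to `π·F(j)/4 + δ` with `|δ| ≤ 2π/56`. -/
theorem stmt_0 (F : ℕ → ℝ) (hF : ∀ n, F n = 1 ∨ F n = -1) (j : ℕ) (hj : 1 ≤ j) :
    ∃ δ : ℝ, |δ| ≤ 2 * π / 56 ∧
      ∃ n : ℤ, (8 : ℝ) ^ j * (2 * π * ∑' i : ℕ, F (i + 1) / 8 ^ (i + 2)) =
        π * F j / 4 + δ + 2 * π * n := by
  obtain ⟨m, rfl⟩ : ∃ m, j = m + 1 := ⟨j - 1, by omega⟩
  have hb : (1 : ℝ) < 8 := by norm_num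
  have hF_abs : ∀ i, |F i| ≤ 1 := fun i => by rcases hF i with h | h <;> simp [h]
  have hF_int : ∀ i, ∃ k : ℤ, F i = k := fun i => by
    rcases hF i with h | h
    exacts [⟨1, by simp [h]⟩, ⟨-1, by simp [h]⟩]
  have hθ : ∑' i : ℕ, F (i + 1) / 8 ^ (i + 2) = (∑' i : ℕ, F (i + 1) / 8 ^ (i + 1)) / 8 := by
    rw [← tsum_div_const]; congr 1; ext i; rw [pow_succ _ (i + 1), div_div]
  obtain ⟨n, hn⟩ := exists_int_pow_mul_tsum_div_pow_succ (b := 8) (by norm_num)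
    (fun i => hF_abs (i + 1)) (fun i => hF_int (i + 1)) m
  have hshift := mul_tsum_div_pow_succ hb (a := fun i => F (i + m + 1)) (fun i => hF_abs _)
  have htail := abs_tsum_div_pow_succ_le hb (a := fun i => F (i + 1 + m + 1)) (fun i => hF_abs _)
  push_cast at hn
  simp only [zero_add] at hshift
  refine ⟨2 * π / 8 * ∑' i, F (i + 1 + m + 1) / 8 ^ (i + 1), ?_, n, ?_⟩
  · rw [abs_mul, abs_of_pos (by positivity)]
    calc _ ≤ 2 * π / 8 * (1 / (8 - 1)) := by gcongr
      _ = 2 * π / 56 := by ring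
  · rw [hθ, pow_succ]
    linear_combination (2 * π / 8) * (8 * hn + hshift)
end

section
/- For F : ℕ → {-1,1} and θ_L = 2π Σ_{i=1}^∞ F(i)/8^{i+1}, for every j ≥ 1 there exists δ with |δ| ≤ 2π/56 such that 8^j · θ_L + π/4 ≡ π/2 + δ (mod 2π) if F(j) = 1, and 8^j · θ_L + π/4 ≡ δ (mod 2π) if F(j) = -1. -/
open Real

/-!
Write `θ_L = 2π S` with `S = ∑ F(i+1)/8^(i+2)`. Multiplying by `8^j` shifts the base-8 digits:
the digits `F 1, …, F (j-1)` land in the integers, the digit `F j` becomes `F j / 8 = ±1/8`,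
and the remaining digits form a tail of absolute value at most `∑_{i ≥ 2} 8^{-i} = 1/56`.
So `8^j θ_L ≡ ±π/4 + δ` with `|δ| ≤ 2π/56`, and adding `π/4` gives `π/2 + δ` or `δ`.
-/

open Finset

section DigitExpansion

variable {b : ℝ} {a : ℕ → ℝ}

lemma norm_div_pow_le_inv_pow (hb : 1 < b) (ha : ∀ n, |a n| ≤ 1) (i : ℕ) :
    ‖a i / b ^ i‖ ≤ b⁻¹ ^ i := by
  rw [norm_div, norm_pow, Real.norm_eq_abs, Real.norm_of_nonneg (by linarith), inv_pow,
    div_eq_mul_inv]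
  exact mul_le_of_le_one_left (by positivity) (ha i)

lemma summable_div_pow_of_abs_le_one (hb : 1 < b) (ha : ∀ n, |a n| ≤ 1) :
    Summable fun i => a i / b ^ i :=
  Summable.of_norm_bounded (summable_geometric_of_lt_one (by positivity)
    (inv_lt_one_of_one_lt₀ hb)) (norm_div_pow_le_inv_pow hb ha)

lemma abs_tsum_div_pow_le (hb : 1 < b) (ha : ∀ n, |a n| ≤ 1) :
    |∑' i, a i / b ^ i| ≤ b / (b - 1) := by
  have hgeo : HasSum (fun i => b⁻¹ ^ i) (b / (b - 1)) := by
    convert hasSum_geometric_of_lt_one (by positivity) (inv_lt_one_of_one_lt₀ hb) using 1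
    field_simp
  rw [← Real.norm_eq_abs]
  exact tsum_of_norm_bounded hgeo (norm_div_pow_le_inv_pow hb ha)

lemma pow_mul_tsum_div_pow (hb : b ≠ 0) (hs : Summable fun i => a i / b ^ i) (n : ℕ) :
    b ^ n * ∑' i, a i / b ^ i =
      ∑ i ∈ range n, a i * b ^ (n - i) + ∑' i, a (i + n) / b ^ i := by
  rw [← hs.sum_add_tsum_nat_add n, mul_add, mul_sum, ← tsum_mul_left]
  congr 1
  · refine sum_congr rfl fun i hi => ?_
    rw [← Nat.sub_add_cancel (mem_range.mp hi).le, pow_add, Nat.add_sub_cancel]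
    field_simp
  · refine tsum_congr fun i => ?_
    rw [pow_add]
    field_simp

end DigitExpansion

lemma exists_int_pow_mul_tsum_eq (F : ℕ → ℝ) (hint : ∀ n, ∃ m : ℤ, F n = m)
    (hbd : ∀ n, |F n| ≤ 1) {j : ℕ} (hj : 1 ≤ j) :
    ∃ (N : ℤ) (T : ℝ), |T| ≤ 1 / 56 ∧
      (8 : ℝ) ^ j * ∑' i : ℕ, F (i + 1) / 8 ^ (i + 2) = N + F j / 8 + T := by
  obtain ⟨k, rfl⟩ := Nat.exists_eq_add_of_le' hj
  choose G hG using hint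
  have hbd' : ∀ n, |F (n + 1)| ≤ 1 := fun n => hbd (n + 1)
  have hS : ∑' i : ℕ, F (i + 1) / 8 ^ (i + 2) = (∑' i : ℕ, F (i + 1) / 8 ^ i) / 64 := by
    rw [← tsum_div_const]
    exact tsum_congr fun i => by rw [pow_add]; ring
  refine ⟨∑ i ∈ range k, G (i + 1) * 8 ^ (k - 1 - i),
    (∑' i : ℕ, F (i + (k + 1) + 1) / 8 ^ i) / 64, ?_, ?_⟩
  · rw [abs_div, abs_of_pos (by norm_num : (0 : ℝ) < 64)]
    have := abs_tsum_div_pow_le (by norm_num : (1 : ℝ) < 8) fun i => hbd' (i + (k + 1))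
    linarith
  · rw [hS, mul_div_assoc', pow_mul_tsum_div_pow (by norm_num)
      (summable_div_pow_of_abs_le_one (by norm_num) hbd'), sum_range_succ, add_div, add_div,
      sum_div]
    push_cast
    congr 2
    · refine sum_congr rfl fun i hi => ?_
      have hik : k + 1 - i = (k - 1 - i) + 2 := by have := mem_range.mp hi; omega
      rw [← hG, hik, pow_add]
      ring
    · rw [Nat.add_sub_cancel_left]
      ring

/-- For `θ_L = 2π Σ_{i=1}^∞ F(i)/8^{i+1}` with `F : ℕ → {-1,1}` and every `j ≥ 1`,
there is `δ` with `|δ| ≤ 2π/56` such that `8^j·θ_L + π/4 ≡ π/2 + δ (mod 2π)` if `F j = 1`,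
and `8^j·θ_L + π/4 ≡ δ (mod 2π)` if `F j = -1`. -/
theorem stmt_1 (F : ℕ → ℝ) (hF : ∀ n, F n = 1 ∨ F n = -1) (j : ℕ) (hj : 1 ≤ j) :
    ∃ δ : ℝ, |δ| ≤ 2 * π / 56 ∧
      ((F j = 1 → ∃ n : ℤ,
          (8 : ℝ) ^ j * (2 * π * ∑' i : ℕ, F (i + 1) / 8 ^ (i + 2)) + π / 4 =
            π / 2 + δ + 2 * π * n) ∧
       (F j = -1 → ∃ n : ℤ,
          (8 : ℝ) ^ j * (2 * π * ∑' i : ℕ, F (i + 1) / 8 ^ (i + 2)) + π / 4 =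
            δ + 2 * π * n)) := by
  have hint : ∀ n, ∃ m : ℤ, F n = m := fun n => by
    rcases hF n with h | h
    exacts [⟨1, by simp [h]⟩, ⟨-1, by simp [h]⟩]
  have hbd : ∀ n, |F n| ≤ 1 := fun n => by rcases hF n with h | h <;> simp [h]
  obtain ⟨N, T, hT, hexp⟩ := exists_int_pow_mul_tsum_eq F hint hbd hj
  have hθ : (8 : ℝ) ^ j * (2 * π * ∑' i : ℕ, F (i + 1) / 8 ^ (i + 2)) =
      2 * π * (N + F j / 8 + T) := by
    rw [mul_left_comm, hexp]
  refine ⟨2 * π * T, ?_, fun h => ⟨N, ?_⟩, fun h => ⟨N, ?_⟩⟩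
  · rw [abs_mul, abs_of_pos (by positivity)]
    nlinarith [pi_pos]
  all_goals rw [hθ, h]; ring
end

section
/- With the recursion δ₀ = γ ∈ [0,1/3], δ_{k+1} = 4δ_k - b_{k+1} with b_{k+1} ∈ {0,1} and γ = Σ a_i/4^i with a_i ∈ {0,1}: if m is the first index where b_m ≠ a_m, then δ_m ∉ (-2/3, 1), and moreover δ_k ∉ (-2/3, 1) for all k ≥ m, regardless of the subsequent bits b_{k}. -/
/-!
The "correct" tail `t_k = Σ_{i ≥ 1} a_{k+i} / 4^i` lies in `[0, 1/3]` and satisfies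
`t_k = 4 t_{k-1} - a_k`, so `δ_k = t_k` as long as the bits agree. At the first disagreement
`δ_m = t_m + (a_m - b_m)` with `a_m - b_m = ±1`, which puts `δ_m` in `[1, 4/3]` or `[-1, -2/3]`.
Once outside `(-2/3, 1)` the map `δ ↦ 4δ - b` stays outside:
`4δ - b ≥ 4 - 1` or `4δ - b ≤ -8/3`.
-/

open Set

noncomputable def quaternaryTail (a : ℕ → ℝ) (k : ℕ) : ℝ :=
  ∑' i : ℕ, a (k + i + 1) / 4 ^ (i + 1)

section QuaternaryTail

variable {a : ℕ → ℝ} (ha : ∀ i, a i ∈ Icc (0 : ℝ) 1)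
include ha

lemma quaternaryTail_term_mem_Icc (k i : ℕ) :
    a (k + i + 1) / 4 ^ (i + 1) ∈ Icc 0 (1 / 4 * (1 / 4) ^ i) := by
  have hpow : 1 / 4 * (1 / 4 : ℝ) ^ i = 1 / 4 ^ (i + 1) := by
    rw [pow_succ, one_div_pow, one_div_mul_one_div, mul_comm]
  rw [hpow]
  obtain ⟨h0, h1⟩ := ha (k + i + 1)
  exact ⟨by positivity, div_le_div_of_nonneg_right h1 (by positivity)⟩

lemma summable_quaternaryTail (k : ℕ) :
    Summable fun i : ℕ ↦ a (k + i + 1) / 4 ^ (i + 1) :=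
  Summable.of_nonneg_of_le (fun i ↦ (quaternaryTail_term_mem_Icc ha k i).1)
    (fun i ↦ (quaternaryTail_term_mem_Icc ha k i).2)
    ((summable_geometric_of_lt_one (by norm_num) (by norm_num)).mul_left _)

lemma quaternaryTail_mem_Icc (k : ℕ) : quaternaryTail a k ∈ Icc 0 (1 / 3) := by
  have hgeom : ∑' i : ℕ, 1 / 4 * (1 / 4 : ℝ) ^ i = 1 / 3 := by
    rw [tsum_mul_left, tsum_geometric_of_lt_one (by norm_num) (by norm_num)]
    norm_num
  refine ⟨tsum_nonneg fun i ↦ (quaternaryTail_term_mem_Icc ha k i).1, hgeom ▸ ?_⟩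
  exact (summable_quaternaryTail ha k).tsum_le_tsum
    (fun i ↦ (quaternaryTail_term_mem_Icc ha k i).2)
    ((summable_geometric_of_lt_one (by norm_num) (by norm_num)).mul_left _)

lemma quaternaryTail_succ (k : ℕ) :
    quaternaryTail a (k + 1) = 4 * quaternaryTail a k - a (k + 1) := by
  have hshift (i : ℕ) :
      4 * (a (k + (i + 1) + 1) / 4 ^ (i + 1 + 1)) = a (k + 1 + i + 1) / 4 ^ (i + 1) := by
    rw [pow_succ, show k + (i + 1) + 1 = k + 1 + i + 1 by ring]
    field_simp
  rw [quaternaryTail, quaternaryTail, (summable_quaternaryTail ha k).tsum_eq_zero_add, mul_add,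
    ← tsum_mul_left]
  simp only [hshift, add_zero, zero_add, pow_one]
  ring

end QuaternaryTail

lemma add_sub_notMem_Ioo {t x y : ℝ} (ht : t ∈ Icc (0 : ℝ) (1 / 3))
    (hx : x = 0 ∨ x = 1) (hy : y = 0 ∨ y = 1) (hxy : y ≠ x) :
    t + (x - y) ∉ Ioo (-(2 / 3) : ℝ) 1 := by
  obtain ⟨ht0, ht1⟩ := ht
  rintro ⟨hlo, hhi⟩
  rcases hx with rfl | rfl <;> rcases hy with rfl | rfl <;> first | exact hxy rfl | linarith

lemma four_mul_sub_notMem_Ioo {x b : ℝ} (hx : x ∉ Ioo (-(2 / 3) : ℝ) 1)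
    (hb : b = 0 ∨ b = 1) :
    4 * x - b ∉ Ioo (-(2 / 3) : ℝ) 1 := by
  rw [mem_Ioo, not_and_or, not_lt, not_lt] at hx
  rintro ⟨hlo, hhi⟩
  rcases hx with hx | hx <;> rcases hb with rfl | rfl <;> linarith

theorem stmt_6_general (a b : ℕ → ℝ) (ha : ∀ i, a i = 0 ∨ a i = 1)
    (hb : ∀ i, b i = 0 ∨ b i = 1) (γ : ℝ)
    (hγ : γ = ∑' i : ℕ, a (i + 1) / 4 ^ (i + 1))
    (δ : ℕ → ℝ) (hδ0 : δ 0 = γ) (hδ : ∀ k, δ (k + 1) = 4 * δ k - b (k + 1))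
    (m : ℕ) (hm : 1 ≤ m) (hfirst : ∀ i, 1 ≤ i → i < m → b i = a i)
    (hne : b m ≠ a m) :
    δ m ∉ Set.Ioo (-(2 / 3) : ℝ) 1 ∧ ∀ k, m ≤ k → δ k ∉ Set.Ioo (-(2 / 3) : ℝ) 1 := by
  have ha' : ∀ i, a i ∈ Icc (0 : ℝ) 1 := fun i ↦ by rcases ha i with h | h <;> simp [h]
  have hagree : ∀ k < m, δ k = quaternaryTail a k := by
    intro k
    induction k with
    | zero => intro _; simp [hδ0, hγ, quaternaryTail]
    | succ k ih =>
      intro hk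
      rw [hδ, ih (by omega), hfirst _ (by omega) hk, quaternaryTail_succ ha']
  have hδm : δ m = quaternaryTail a m + (a m - b m) := by
    obtain ⟨n, rfl⟩ := Nat.exists_eq_add_of_le' hm
    rw [hδ, hagree n (by omega), quaternaryTail_succ ha']
    ring
  have hescape : δ m ∉ Ioo (-(2 / 3) : ℝ) 1 :=
    hδm ▸ add_sub_notMem_Ioo (quaternaryTail_mem_Icc ha' m) (ha m) (hb m) hne
  refine ⟨hescape, fun k hk ↦ ?_⟩
  induction k, hk using Nat.le_induction with
  | base => exact hescape
  | succ k _ ih => exact hδ k ▸ four_mul_sub_notMem_Ioo ih (hb (k + 1))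

/-- With `δ₀ = γ ∈ [0,1/3]`, `δ_{k+1} = 4 δ_k − b_{k+1}`, bits `b_i ∈ {0,1}`, and
`γ = Σ a_i/4^i` with `a_i ∈ {0,1}`: if `m` is the first index where `b_m ≠ a_m`,
then `δ_m ∉ (−2/3, 1)`, and moreover `δ_k ∉ (−2/3, 1)` for all `k ≥ m`. -/
theorem stmt_6 (a b : ℕ → ℝ) (ha : ∀ i, a i = 0 ∨ a i = 1)
    (hb : ∀ i, b i = 0 ∨ b i = 1) (γ : ℝ) (hγ0 : γ ∈ Set.Icc (0 : ℝ) (1 / 3))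
    (hγ : γ = ∑' i : ℕ, a (i + 1) / 4 ^ (i + 1))
    (δ : ℕ → ℝ) (hδ0 : δ 0 = γ) (hδ : ∀ k, δ (k + 1) = 4 * δ k - b (k + 1))
    (m : ℕ) (hm : 1 ≤ m) (hfirst : ∀ i, 1 ≤ i → i < m → b i = a i)
    (hne : b m ≠ a m) :
    δ m ∉ Set.Ioo (-(2 / 3) : ℝ) 1 ∧ ∀ k, m ≤ k → δ k ∉ Set.Ioo (-(2 / 3) : ℝ) 1 :=
  stmt_6_general a b ha hb γ hγ δ hδ0 hδ m hm hfirst hne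
end

section
/- For distinct positive integers m and n, after rotating a point on the unit circle starting at angle 0 by angle √2·π exactly m times and by −√2·π exactly n times, the resulting angle θ = (m−n)√2·π satisfies sin²(θ) ≥ 1/(2(m−n)²) > 1/(2(m+n)²); in particular sin(θ) ≠ 0. -/
/-!
Write `k√2 = j + y` with `j` the integer nearest to `k√2`. As `k√2` is irrational, `2k² - j²` is a
nonzero integer, so `1 ≤ |y| |k√2 + j| ≤ |y| (2√2|k| + |y|)`, which forces `|y| ≥ 1/(4|k|)`.
By concavity, `sin (t π)` lies above its chord `2√2 t` on `[0, 1/4]`, hence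
`|sin (k√2 π)| = |sin (y π)| ≥ 2√2/(4|k|) = 1/(√2|k|)`.
-/

open Real

theorem mul_sin_le_sin_mul {a x : ℝ} (ha : 0 ≤ a) (ha' : a ≤ π) (hx : 0 ≤ x) (hx' : x ≤ 1) :
    x * sin a ≤ sin (x * a) := by
  simpa using strictConcaveOn_sin_Icc.concaveOn.2 ⟨le_rfl, pi_pos.le⟩ ⟨ha, ha'⟩
    (sub_nonneg.2 hx') hx

theorem two_mul_sqrt_two_mul_le_abs_sin_mul_pi {c y : ℝ} (hc : 0 ≤ c) (hc' : c ≤ 1 / 4)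
    (hcy : c ≤ |y|) (hy : |y| ≤ 1 / 2) : 2 * √2 * c ≤ |sin (y * π)| := by
  have chord : 2 * √2 * c ≤ sin (c * π) := by
    have := mul_sin_le_sin_mul (a := π / 4) (x := 4 * c) (by positivity) (by linarith [pi_pos])
      (by positivity) (by linarith)
    rw [sin_pi_div_four, show 4 * c * (π / 4) = c * π by ring] at this
    linarith
  have mono : sin (c * π) ≤ sin (|y| * π) :=
    sin_le_sin_of_le_of_le_pi_div_two (by nlinarith [pi_pos]) (by nlinarith [pi_pos])
      (by nlinarith [pi_pos])
  have odd : sin (|y| * π) ≤ |sin (y * π)| := by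
    rcases abs_choice y with h | h <;> rw [h]
    · exact le_abs_self _
    · rw [neg_mul, sin_neg]
      exact neg_le_abs _
  exact chord.trans (mono.trans odd)

theorem one_div_four_mul_abs_le_abs_mul_sqrt_two_sub {k : ℤ} (hk : k ≠ 0) (j : ℤ) :
    1 / (4 * |(k : ℝ)|) ≤ |k * √2 - j| := by
  set x := (k : ℝ) * √2
  have hx : |x| = √2 * |(k : ℝ)| := by simp [x, abs_mul, mul_comm]
  have hx2 : x ^ 2 = 2 * k ^ 2 := by simp [x, mul_pow, mul_comm]
  have hirr : Irrational x := by simpa [x] using irrational_sqrt_two.intCast_mul hk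
  have hgap : (1 : ℝ) ≤ |x ^ 2 - j ^ 2| := by
    have hne : 2 * k ^ 2 - j ^ 2 ≠ 0 := by
      intro h
      have h' : (x + j) * (x - j) = 0 := by
        rw [← sq_sub_sq, hx2]; exact_mod_cast h
      rcases mul_eq_zero.1 h' with h'' | h''
      · exact hirr.ne_int (-j) (by push_cast; linarith)
      · exact hirr.ne_int j (sub_eq_zero.1 h'')
    rw [hx2]; exact_mod_cast Int.one_le_abs hne
  have hfactor : |x ^ 2 - j ^ 2| ≤ |x - j| * (2 * |x| + |x - j|) := by
    rw [sq_sub_sq, abs_mul, mul_comm]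
    gcongr
    calc |x + j| = |2 * x - (x - j)| := by ring_nf
      _ ≤ |2 * x| + |x - j| := abs_sub _ _
      _ = 2 * |x| + |x - j| := by rw [abs_mul, abs_two]
  have hk1 : (1 : ℝ) ≤ |(k : ℝ)| := by exact_mod_cast Int.one_le_abs hk
  have hsqrt : √2 < 3 / 2 := by rw [sqrt_lt' (by norm_num)]; norm_num
  rw [div_le_iff₀ (by positivity)]
  by_contra! h
  rw [hx] at hfactor
  set t := |x - j|
  have ht : t < 1 / 4 := by nlinarith [abs_nonneg (x - j)]
  have hlin : t * (2 * (√2 * |(k : ℝ)|)) < 3 / 4 := by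
    nlinarith [abs_nonneg (x - j), sqrt_nonneg 2]
  nlinarith [abs_nonneg (x - j)]

theorem one_div_sqrt_two_mul_abs_le_abs_sin {k : ℤ} (hk : k ≠ 0) :
    1 / (√2 * |(k : ℝ)|) ≤ |sin (k * √2 * π)| := by
  set x := (k : ℝ) * √2
  have hk1 : (1 : ℝ) ≤ |(k : ℝ)| := by exact_mod_cast Int.one_le_abs hk
  have hperiod : |sin (x * π)| = |sin ((x - round x) * π)| := by
    rw [show x * π = (x - round x) * π + round x * π by ring, sin_add_int_mul_pi, abs_mul,
      abs_zpow, abs_neg, abs_one, one_zpow, one_mul]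
  have := two_mul_sqrt_two_mul_le_abs_sin_mul_pi (by positivity)
    (by rw [div_le_div_iff₀ (by positivity) (by norm_num)]; linarith)
    (one_div_four_mul_abs_le_abs_mul_sqrt_two_sub hk (round x)) (abs_sub_round x)
  rw [hperiod]
  convert this using 1
  field_simp
  rw [sq_sqrt zero_le_two]
  norm_num

theorem one_div_two_mul_sq_le_sin_sq {k : ℤ} (hk : k ≠ 0) :
    1 / (2 * (k : ℝ) ^ 2) ≤ sin (k * √2 * π) ^ 2 := by
  have h := pow_le_pow_left₀ (by positivity) (one_div_sqrt_two_mul_abs_le_abs_sin hk) 2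
  rwa [sq_abs, div_pow, mul_pow, sq_abs, sq_sqrt zero_le_two, one_pow] at h

/-- For distinct positive integers `m` and `n`, the angle `θ = (m−n)·√2·π` obtained by
`m` rotations by `√2·π` and `n` rotations by `−√2·π` satisfies
`sin²θ ≥ 1/(2(m−n)²) > 1/(2(m+n)²)`; in particular `sin θ ≠ 0`. -/
theorem stmt_16 (m n : ℕ) (hm : 0 < m) (hn : 0 < n) (hmn : m ≠ n) :
    sin (((m : ℝ) - n) * Real.sqrt 2 * π) ^ 2 ≥ 1 / (2 * ((m : ℝ) - n) ^ 2) ∧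
    1 / (2 * ((m : ℝ) - n) ^ 2) > 1 / (2 * ((m : ℝ) + n) ^ 2) ∧
    sin (((m : ℝ) - n) * Real.sqrt 2 * π) ≠ 0 := by
  have hk : (m : ℤ) - n ≠ 0 := sub_ne_zero.2 (by exact_mod_cast hmn)
  have hbound := one_div_two_mul_sq_le_sin_sq hk
  push_cast at hbound
  have hk' : (m : ℝ) - n ≠ 0 := sub_ne_zero.2 (by exact_mod_cast hmn)
  have hpos : 0 < 1 / (2 * ((m : ℝ) - n) ^ 2) := by positivity
  refine ⟨hbound, ?_, fun h ↦ ?_⟩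
  · have hm' : (0 : ℝ) < m := by exact_mod_cast hm
    have hn' : (0 : ℝ) < n := by exact_mod_cast hn
    exact one_div_lt_one_div_of_lt (by positivity) (by nlinarith)
  · rw [h] at hbound
    linarith [zero_pow (M₀ := ℝ) two_ne_zero]
end

section
/- For any nonzero integer k, sin²(k·√2·π) ≥ 1/(2k²). -/
open Real

/-!
Write `x = k√2` and let `m` be the integer nearest to `x`, at distance `d ≤ 1/2`. Since `√2` is
irrational, `2k² - m²` is a nonzero integer, so `1 ≤ |x² - m²| = d |x + m| ≤ d (2|x| + 1/2)`:
`d` is at least about `1 / (2√2 |k|)`. As `|sin (xπ)| = sin (dπ)`, it remains to see that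
`|x| sin (dπ) ≥ 1`. For `d ≥ 1/4` this follows from `sin (dπ) ≥ sin (π/4) = √2/2`; for `d ≤ 1/4`
concavity of `sin` gives the chord bound `sin (dπ) ≥ 2√2 d`, which beats Jordan's `sin (dπ) ≥ 2d`
by just enough.
-/

theorem one_le_abs_sq_sub_sq_of_irrational {x : ℝ} (hx : Irrational x) {n : ℤ} (hn : x ^ 2 = n)
    (m : ℤ) : 1 ≤ |x ^ 2 - (m : ℝ) ^ 2| := by
  have hne : n - m ^ 2 ≠ 0 := by
    intro h
    have hsq : x ^ 2 = (m : ℝ) ^ 2 := by rw [hn]; exact_mod_cast sub_eq_zero.mp h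
    rcases sq_eq_sq_iff_eq_or_eq_neg.mp hsq with h' | h'
    · exact hx.ne_int m h'
    · exact hx.ne_int (-m) (by push_cast; exact h')
  rw [hn]
  exact_mod_cast Int.one_le_abs hne

theorem one_le_abs_sub_mul_of_one_le_abs_sq_sub_sq {x m : ℝ} (hm : |x - m| ≤ 1 / 2)
    (h : 1 ≤ |x ^ 2 - m ^ 2|) : 1 ≤ |x - m| * (2 * |x| + 1 / 2) := by
  have hsum : |x + m| ≤ 2 * |x| + 1 / 2 :=
    calc |x + m| = |2 * x - (x - m)| := by ring_nf
      _ ≤ |2 * x| + |x - m| := abs_sub _ _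
      _ ≤ 2 * |x| + 1 / 2 := by rw [abs_mul, abs_two]; linarith
  calc 1 ≤ |x ^ 2 - m ^ 2| := h
    _ = |x - m| * |x + m| := by rw [← abs_mul]; ring_nf
    _ ≤ |x - m| * (2 * |x| + 1 / 2) := by gcongr

theorem abs_sin_mul_pi_eq_abs_sin_abs_sub_int_mul_pi (x : ℝ) (m : ℤ) :
    |sin (x * π)| = |sin (|x - m| * π)| := by
  rcases abs_choice (x - m) with h | h <;> rw [h]
  · rw [sub_mul, sin_sub_int_mul_pi, abs_mul, abs_neg_one_zpow, one_mul]
  · rw [neg_mul, sin_neg, abs_neg, sub_mul, sin_sub_int_mul_pi, abs_mul, abs_neg_one_zpow, one_mul]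

theorem two_mul_sqrt_two_mul_le_sin_mul_pi {d : ℝ} (h0 : 0 ≤ d) (h1 : d ≤ 1 / 4) :
    2 * √2 * d ≤ sin (d * π) := by
  have hchord := strictConcaveOn_sin_Icc.concaveOn.2 (Set.left_mem_Icc.mpr pi_pos.le)
    (⟨by positivity, by linarith [pi_pos]⟩ : π / 4 ∈ Set.Icc 0 π)
    (show 0 ≤ 1 - 4 * d by linarith) (show 0 ≤ 4 * d by linarith) (by ring)
  simp only [smul_eq_mul, mul_zero, zero_add, sin_zero, sin_pi_div_four] at hchord
  calc 2 * √2 * d = 4 * d * (√2 / 2) := by ring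
    _ ≤ sin (4 * d * (π / 4)) := hchord
    _ = sin (d * π) := by ring_nf

theorem sqrt_two_div_two_le_sin_mul_pi {d : ℝ} (h0 : 1 / 4 ≤ d) (h1 : d ≤ 1 / 2) :
    √2 / 2 ≤ sin (d * π) := by
  rw [← sin_pi_div_four]
  apply strictMonoOn_sin.monotoneOn ⟨by linarith [pi_pos], by linarith [pi_pos]⟩
    ⟨by nlinarith [pi_pos], by nlinarith [pi_pos]⟩
  nlinarith [pi_pos]

theorem one_le_mul_sin_mul_pi {x d : ℝ} (hx : √2 ≤ x) (hd0 : 0 ≤ d) (hd1 : d ≤ 1 / 2)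
    (hd : 1 ≤ d * (2 * x + 1 / 2)) : 1 ≤ x * sin (d * π) := by
  have hs : √2 * √2 = 2 := mul_self_sqrt zero_le_two
  have hx0 : 0 ≤ x := (sqrt_nonneg 2).trans hx
  rcases le_total d (1 / 4) with h | h
  · have hsin := two_mul_sqrt_two_mul_le_sin_mul_pi hd0 h
    have hs1 : 1.4 ≤ √2 := by nlinarith [sqrt_nonneg 2]
    have hslope : 2 * x + 1 / 2 ≤ x * (2 * √2) := by nlinarith
    calc 1 ≤ d * (2 * x + 1 / 2) := hd
      _ ≤ d * (x * (2 * √2)) := by gcongr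
      _ = x * (2 * √2 * d) := by ring
      _ ≤ x * sin (d * π) := by gcongr
  · have hsin := sqrt_two_div_two_le_sin_mul_pi h hd1
    calc 1 = √2 * (√2 / 2) := by linarith
      _ ≤ x * sin (d * π) := mul_le_mul hx hsin (by positivity) hx0

/-- For any nonzero integer `k`, `sin²(k·√2·π) ≥ 1/(2k²)`. -/
theorem stmt_17 (k : ℤ) (hk : k ≠ 0) :
    1 / (2 * (k : ℝ) ^ 2) ≤ sin ((k : ℝ) * Real.sqrt 2 * π) ^ 2 := by
  set x := (k : ℝ) * √2
  have hx2 : x ^ 2 = ((2 * k ^ 2 : ℤ) : ℝ) := by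
    push_cast; rw [mul_pow, sq_sqrt zero_le_two]; ring
  have hxge : √2 ≤ |x| := by
    rw [abs_mul, abs_of_nonneg (sqrt_nonneg 2)]
    exact le_mul_of_one_le_left (sqrt_nonneg 2) (by exact_mod_cast Int.one_le_abs hk)
  have hdist : 1 ≤ |x - round x| * (2 * |x| + 1 / 2) :=
    one_le_abs_sub_mul_of_one_le_abs_sq_sub_sq (abs_sub_round x)
      (one_le_abs_sq_sub_sq_of_irrational (irrational_sqrt_two.intCast_mul hk) hx2 (round x))
  have hkey : 1 ≤ |x| * |sin (x * π)| := by
    rw [abs_sin_mul_pi_eq_abs_sin_abs_sub_int_mul_pi x (round x)]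
    calc 1 ≤ |x| * sin (|x - round x| * π) :=
          one_le_mul_sin_mul_pi hxge (abs_nonneg _) (abs_sub_round x) hdist
      _ ≤ |x| * |sin (|x - round x| * π)| := by gcongr; exact le_abs_self _
  have hsq : 1 ≤ x ^ 2 * sin (x * π) ^ 2 := by
    simpa only [mul_pow, sq_abs] using one_le_pow₀ (n := 2) hkey
  rw [div_le_iff₀ (by positivity)]
  push_cast at hx2
  rwa [← hx2, mul_comm]
end
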